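/- arXiv:1112.2461 — 7 statements merged into one kernel-verified Lean document; each statement's English description precedes it below -/
import Mathlib

section
/- For every prime p and every integer k with p < k, the p-adic valuation of k! satisfies ord_p(k!) ≥ (k − p)/(p − 1) − log(k − 1)/log p. -/
theorem stmt_3 (p k : ℕ) (hp : p.Prime) (hpk : p < k) :
    ((k : ℝ) - p) / ((p : ℝ) - 1) - Real.log ((k : ℝ) - 1) / Real.log p ≤
      ((Nat.factorial k).factorization p : ℝ) := by
  haveI : Fact p.Prime := ⟨hp⟩
  have hp2 : 2 ≤ p := hp.two_le
  have hk0 : k ≠ 0 := by omega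
  set s := (p.digits k).sum with hs
  set L := Nat.log p k with hL
  have hleg : (p - 1) * padicValNat p k.factorial = k - s :=
    sub_one_mul_padicValNat_factorial k
  have hsle : s ≤ k := Nat.digit_sum_le p k
  have hfac : (k.factorial).factorization p = padicValNat p k.factorial :=
    Nat.factorization_def _ hp
  -- cast Legendre to ℝ
  have hlegR : ((p : ℝ) - 1) * (padicValNat p k.factorial : ℝ) = (k : ℝ) - s := by
    have := congrArg (fun n : ℕ => (n : ℝ)) hleg
    push_cast [Nat.cast_sub (by omega : 1 ≤ p), Nat.cast_sub hsle] at this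
    linarith [this]
  have hp1R : (0:ℝ) < (p : ℝ) - 1 := by
    have : (2:ℝ) ≤ p := by exact_mod_cast hp2
    linarith
  have hlogp : 0 < Real.log p := Real.log_pos (by exact_mod_cast hp2)
  have hkey : ((s : ℝ) - p) / ((p:ℝ) - 1) ≤ Real.log ((k:ℝ) - 1) / Real.log p := by
    have hpowle : p ^ L ≤ k := Nat.pow_log_le_self p hk0
    rcases eq_or_lt_of_le hpowle with heq | hlt
    · -- k = p ^ L, digit sum is 1
      have hdig : p.digits k = List.replicate L 0 ++ p.digits 1 := by
        rw [← heq, ← Nat.digits_base_pow_mul (by omega) (by norm_num : 0 < 1), mul_one]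
      have hs1 : s = 1 := by
        rw [hs, hdig]
        simp [Nat.digits_def' (by omega : 1 < p), Nat.mod_eq_of_lt (by omega : 1 < p),
          Nat.div_eq_of_lt (by omega : 1 < p)]
      have h1 : ((s : ℝ) - p) / ((p:ℝ) - 1) ≤ 0 := by
        apply div_nonpos_of_nonpos_of_nonneg _ (le_of_lt hp1R)
        rw [hs1]
        have : (2:ℝ) ≤ p := by exact_mod_cast hp2
        push_cast; linarith
      have h2 : 0 ≤ Real.log ((k:ℝ) - 1) / Real.log p := by
        apply div_nonneg _ (le_of_lt hlogp)
        apply Real.log_nonneg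
        have : (2:ℝ) ≤ k := by exact_mod_cast (by omega : 2 ≤ k)
        linarith
      linarith
    · -- p ^ L < k
      have hLlog : (L : ℝ) * Real.log p ≤ Real.log ((k:ℝ) - 1) := by
        have hple : ((p:ℝ)) ^ L ≤ (k:ℝ) - 1 := by
          have : (p ^ L : ℕ) + 1 ≤ k := hlt
          have := (Nat.cast_le (α := ℝ)).2 this
          push_cast at this
          linarith
        calc (L : ℝ) * Real.log p = Real.log ((p:ℝ) ^ L) := by
              rw [Real.log_pow]
          _ ≤ Real.log ((k:ℝ) - 1) := by
              apply Real.log_le_log (by positivity) hple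
      -- s ≤ (p-1) * (L+1)
      have hslen : s ≤ (p - 1) * (L + 1) := by
        have hlen : (p.digits k).length = L + 1 := Nat.digits_len p k (by omega) hk0
        have := List.sum_le_card_nsmul (p.digits k) (p - 1)
          (fun x hx => by have := Nat.digits_lt_base (by omega) hx; omega)
        rw [hlen] at this
        simpa [smul_eq_mul, mul_comm] using this
      have hsR : (s : ℝ) - p ≤ ((p:ℝ) - 1) * L := by
        have : (s : ℝ) ≤ ((p:ℝ) - 1) * ((L:ℝ) + 1) := by
          have := (Nat.cast_le (α := ℝ)).2 hslen
          push_cast [Nat.cast_sub (by omega : 1 ≤ p)] at this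
          linarith
        have : (2:ℝ) ≤ p := by exact_mod_cast hp2
        nlinarith [this]
      rw [div_le_div_iff₀ hp1R hlogp]
      calc ((s:ℝ) - p) * Real.log p ≤ ((p:ℝ) - 1) * L * Real.log p := by
            apply mul_le_mul_of_nonneg_right hsR (le_of_lt hlogp)
        _ = ((L:ℝ) * Real.log p) * ((p:ℝ) - 1) := by ring
        _ ≤ Real.log ((k:ℝ) - 1) * ((p:ℝ) - 1) :=
            mul_le_mul_of_nonneg_right hLlog (le_of_lt hp1R)
  rw [hfac]
  have hval : (padicValNat p k.factorial : ℝ) = ((k:ℝ) - s) / ((p:ℝ) - 1) := by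
    field_simp at hlegR ⊢
    linarith [hlegR]
  rw [hval]
  rw [div_sub_div _ _ (ne_of_gt hp1R) (ne_of_gt hlogp), div_le_div_iff₀ (by positivity) hp1R]
  rw [div_le_div_iff₀ hp1R hlogp] at hkey
  nlinarith [hkey, hlogp, hp1R]
end

section
/- Assume that for all pairwise coprime positive integers a, b, c with a + b = c one has c < N(abc)^(7/4), where N(abc) is the radical of abc. Then the equation y^q = (x^n − 1)/(x − 1) has no solutions in integers x > 1, y > 1, n ≥ 11, q ≥ 3. -/
/-- The radical of a natural number: the product of its distinct prime factors. -/
def rad (n : ℕ) : ℕ := ∏ p ∈ n.primeFactors, p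

theorem stmt_5
    (hABC : ∀ a b c : ℕ, 0 < a → 0 < b → 0 < c →
      Nat.Coprime a b → Nat.Coprime b c → Nat.Coprime a c → a + b = c →
      (c : ℝ) < (rad (a * b * c) : ℝ) ^ ((7 : ℝ) / 4)) :
    ¬ ∃ x y n q : ℕ, 1 < x ∧ 1 < y ∧ 11 ≤ n ∧ 3 ≤ q ∧
      y ^ q = (x ^ n - 1) / (x - 1) := by
  rintro ⟨x, y, n, q, hx, hy, hn, hq, heq⟩
  have hx0 : 0 < x := by omega
  have hy0 : 0 < y := by omega
  have hdvd : (x - 1) ∣ x ^ n - 1 := by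
    simpa using Nat.sub_dvd_pow_sub_pow x 1 n
  have hkey : y ^ q * (x - 1) = x ^ n - 1 := by
    rw [heq, Nat.div_mul_cancel hdvd]
  have hxn : 1 ≤ x ^ n := Nat.one_le_pow _ _ hx0
  have hyq : 1 ≤ y ^ q := Nat.one_le_pow _ _ hy0
  set b := (x - 1) * y ^ q with hbdef
  have hb' : b = x ^ n - 1 := by rw [hbdef, mul_comm]; exact hkey
  have hbpos : 0 < b := by
    have : 2 ≤ x ^ n := by
      calc 2 = 2 ^ 1 := rfl
      _ ≤ x ^ n := Nat.pow_le_pow_left hx n |>.trans' (Nat.pow_le_pow_right (by omega) (by omega))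
    omega
  have hc : 1 + b = x ^ n := by omega
  -- apply abc
  have habc := hABC 1 b (x ^ n) one_pos hbpos (by omega)
    (Nat.coprime_one_left _) (by rw [← hc, add_comm]; exact (by simp : Nat.Coprime b (b+1)))
    (Nat.coprime_one_left _) hc
  -- radical bound: rad (1 * b * x^n) = rad ((x-1) * y * x) ≤ (x-1) * y * x
  have hx1ne : x - 1 ≠ 0 := by omega
  have hyne : y ≠ 0 := by omega
  have hxne : x ≠ 0 := by omega
  have hpf : (1 * b * x ^ n).primeFactors = ((x - 1) * y * x).primeFactors := by
    rw [one_mul, hbdef, Nat.primeFactors_mul (by positivity) (pow_ne_zero _ hxne),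
      Nat.primeFactors_mul hx1ne (pow_ne_zero _ hyne),
      Nat.primeFactors_pow _ (by omega : q ≠ 0), Nat.primeFactors_pow _ (by omega : n ≠ 0),
      Nat.primeFactors_mul (mul_ne_zero hx1ne hyne) hxne,
      Nat.primeFactors_mul hx1ne hyne]
  have hradle : rad (1 * b * x ^ n) ≤ (x - 1) * y * x := by
    have : rad (1 * b * x ^ n) ∣ (x - 1) * y * x := by
      unfold rad; rw [hpf]; exact Nat.prod_primeFactors_dvd _
    exact Nat.le_of_dvd (by positivity) this
  -- convert real abc inequality to natural numbers: (x^n)^4 < rad^7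
  set r := rad (1 * b * x ^ n) with hrdef
  have hnat : (x ^ n) ^ 4 < r ^ 7 := by
    have h4 : ((x ^ n : ℕ) : ℝ) ^ (4 : ℕ) < ((r : ℝ) ^ ((7 : ℝ) / 4)) ^ (4 : ℕ) := by
      apply pow_lt_pow_left₀ habc (by positivity)
      norm_num
    rw [← Real.rpow_natCast ((r : ℝ) ^ ((7 : ℝ) / 4)) 4, ← Real.rpow_mul (by positivity)] at h4
    norm_num at h4
    have : ((x ^ n : ℕ) : ℝ) ^ (4 : ℕ) < ((r : ℕ) : ℝ) ^ (7 : ℕ) := by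
      rw [← Real.rpow_natCast ((r : ℕ) : ℝ) 7]; exact_mod_cast h4
    exact_mod_cast this
  -- so (x^n)^4 < (x^2 * y)^7
  have hstep : (x ^ n) ^ 4 < (x ^ 2 * y) ^ 7 := by
    have h1 : r ≤ (x - 1) * y * x := hradle
    have h2 : (x - 1) * y * x < x ^ 2 * y := by
      have : x - 1 < x := by omega
      calc (x - 1) * y * x < x * y * x := by
            exact (Nat.mul_lt_mul_right hx0).mpr ((Nat.mul_lt_mul_right hy0).mpr this)
      _ = x ^ 2 * y := by ring
      _ ≤ x ^ 2 * y := le_rfl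
    calc (x ^ n) ^ 4 < r ^ 7 := hnat
    _ ≤ ((x - 1) * y * x) ^ 7 := Nat.pow_le_pow_left h1 7
    _ ≤ (x ^ 2 * y) ^ 7 := Nat.pow_le_pow_left (by omega) 7
  -- cube and use y^3 ≤ y^q ≤ x^n
  have hyq_le : y ^ q ≤ x ^ n := by
    have : y ^ q ≤ y ^ q * (x - 1) := Nat.le_mul_of_pos_right _ (by omega)
    omega
  have hy3 : y ^ 3 ≤ y ^ q := Nat.pow_le_pow_right (by omega) hq
  have hfinal : x ^ (12 * n) < x ^ (42 + 7 * n) := by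
    calc x ^ (12 * n) = ((x ^ n) ^ 4) ^ 3 := by ring
    _ < ((x ^ 2 * y) ^ 7) ^ 3 := by
        exact Nat.pow_lt_pow_left hstep (by norm_num)
    _ = x ^ 42 * (y ^ 3) ^ 7 := by ring
    _ ≤ x ^ 42 * (y ^ q) ^ 7 := by
        exact Nat.mul_le_mul_left _ (Nat.pow_le_pow_left hy3 7)
    _ ≤ x ^ 42 * (x ^ n) ^ 7 := Nat.mul_le_mul_left _ (Nat.pow_le_pow_left hyq_le 7)
    _ = x ^ (42 + 7 * n) := by ring
  have := (Nat.pow_lt_pow_iff_right hx).mp hfinal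
  omega
end

section
/- Assume that for all pairwise coprime positive integers a, b, c with a + b = c one has c < N(abc)^(7/4). If x, y, z > 1 are pairwise coprime positive integers and p, q, r ≥ 2 are integers with x^p + y^q = z^r, then 4/7 < 1/p + 1/q + 1/r. -/
theorem stmt_6
    (hABC : ∀ a b c : ℕ, 0 < a → 0 < b → 0 < c →
      Nat.Coprime a b → Nat.Coprime b c → Nat.Coprime a c → a + b = c →
      (c : ℝ) < (rad (a * b * c) : ℝ) ^ ((7 : ℝ) / 4))
    (x y z p q r : ℕ) (hx : 1 < x) (hy : 1 < y) (hz : 1 < z)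
    (hxy : Nat.Coprime x y) (hyz : Nat.Coprime y z) (hxz : Nat.Coprime x z)
    (hp : 2 ≤ p) (hq : 2 ≤ q) (hr : 2 ≤ r)
    (heq : x ^ p + y ^ q = z ^ r) :
    (4 : ℝ) / 7 < 1 / p + 1 / q + 1 / r := by
  have hx0 : 0 < x := by omega
  have hy0 : 0 < y := by omega
  have hp0 : (0:ℝ) < p := by positivity
  have hq0 : (0:ℝ) < q := by positivity
  have hr0 : (0:ℝ) < r := by positivity
  have hp' : p ≠ 0 := by omega
  have hq' : q ≠ 0 := by omega
  have hr' : r ≠ 0 := by omega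
  have hZ1 : (1:ℝ) < (z:ℝ) := by exact_mod_cast hz
  have hZ0 : (0:ℝ) < (z:ℝ) := by linarith
  -- radical bound
  have hradle : rad (x ^ p * y ^ q * z ^ r) ≤ x * y * z := by
    have hradeq : rad (x ^ p * y ^ q * z ^ r) = rad (x * y * z) := by
      unfold rad
      rw [Nat.primeFactors_mul (by positivity) (by positivity),
          Nat.primeFactors_mul (by positivity) (by positivity),
          Nat.primeFactors_mul (by positivity) (by positivity),
          Nat.primeFactors_mul (by positivity) (by positivity),
          Nat.primeFactors_pow _ hp', Nat.primeFactors_pow _ hq', Nat.primeFactors_pow _ hr']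
    rw [hradeq]
    exact Nat.le_of_dvd (by positivity) (Nat.prod_primeFactors_dvd _)
  have habc := hABC (x ^ p) (y ^ q) (z ^ r) (by positivity) (by positivity) (by positivity)
    (Nat.Coprime.pow p q hxy) (Nat.Coprime.pow q r hyz) (Nat.Coprime.pow p r hxz) heq
  have h1 : ((z : ℝ) ^ ((r : ℝ))) < ((x : ℝ) * y * z) ^ ((7:ℝ)/4) := by
    calc ((z:ℝ) ^ (r:ℝ)) = ((z ^ r : ℕ) : ℝ) := by
          rw [Real.rpow_natCast]; push_cast; ring
    _ < (rad (x ^ p * y ^ q * z ^ r) : ℝ) ^ ((7:ℝ)/4) := habc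
    _ ≤ ((x : ℝ) * y * z) ^ ((7:ℝ)/4) := by
        apply Real.rpow_le_rpow (by positivity)
        · exact_mod_cast hradle
        · norm_num
  -- x < z ^ (r/p), y < z ^ (r/q)
  have key : ∀ (w e : ℕ), 0 < w → w ^ e < z ^ r → e ≠ 0 →
      (w:ℝ) < (z:ℝ) ^ ((r:ℝ)/e) := by
    intro w e hw hwe he
    have he0 : (0:ℝ) < e := by positivity
    rw [← Real.rpow_lt_rpow_iff (by positivity) (by positivity) he0,
        ← Real.rpow_mul (le_of_lt hZ0), div_mul_cancel₀ _ (ne_of_gt he0),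
        Real.rpow_natCast, Real.rpow_natCast]
    exact_mod_cast hwe
  have hyq0 : 0 < y ^ q := pow_pos hy0 q
  have hxp0 : 0 < x ^ p := pow_pos hx0 p
  have hxlt : (x:ℝ) < (z:ℝ) ^ ((r:ℝ)/p) := key x p hx0 (by omega) hp'
  have hylt : (y:ℝ) < (z:ℝ) ^ ((r:ℝ)/q) := key y q hy0 (by omega) hq'
  have hA : (0:ℝ) < (z:ℝ) ^ ((r:ℝ)/p) := Real.rpow_pos_of_pos hZ0 _
  -- combine
  have h2 : ((x:ℝ) * y * z) < (z:ℝ) ^ ((r:ℝ)/p + (r:ℝ)/q + (r:ℝ)/r) := by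
    have hxy' : (x:ℝ) * y < (z:ℝ) ^ ((r:ℝ)/p) * ((z:ℝ) ^ ((r:ℝ)/q)) :=
      mul_lt_mul hxlt hylt.le (by exact_mod_cast hy0) hA.le
    calc (x:ℝ) * y * z < (z:ℝ) ^ ((r:ℝ)/p) * ((z:ℝ) ^ ((r:ℝ)/q)) * z :=
          mul_lt_mul_of_pos_right hxy' hZ0
    _ = _ := by
        rw [Real.rpow_add hZ0, Real.rpow_add hZ0, div_self (ne_of_gt hr0), Real.rpow_one]
  have h3 : (z:ℝ) ^ ((r:ℝ)) < (z:ℝ) ^ (((7:ℝ)/4) * ((r:ℝ)/p + (r:ℝ)/q + (r:ℝ)/r)) := by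
    calc (z:ℝ) ^ ((r:ℝ)) < ((x : ℝ) * y * z) ^ ((7:ℝ)/4) := h1
    _ ≤ ((z:ℝ) ^ ((r:ℝ)/p + (r:ℝ)/q + (r:ℝ)/r)) ^ ((7:ℝ)/4) :=
        Real.rpow_le_rpow (by positivity) h2.le (by norm_num)
    _ = _ := by rw [← Real.rpow_mul (le_of_lt hZ0)]; ring_nf
  have h4 : (r:ℝ) < ((7:ℝ)/4) * ((r:ℝ)/p + (r:ℝ)/q + (r:ℝ)/r) :=
    (Real.rpow_lt_rpow_left_iff hZ1).mp h3
  have hS : ((7:ℝ)/4) * ((r:ℝ)/p + (r:ℝ)/q + (r:ℝ)/r)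
      = (((7:ℝ)/4) * (1/p + 1/q + 1/r)) * r := by ring
  rw [hS] at h4
  have h5 : (1:ℝ) < ((7:ℝ)/4) * (1/p + 1/q + 1/r) := by
    by_contra h
    push_neg at h
    have := mul_le_mul_of_nonneg_right h hr0.le
    linarith
  linarith
end

section
/- Let x > y > 1 be integers with (x^m − 1)/(x − 1) = (y^n − 1)/(y − 1) for integers m, n > 2, and let d = gcd(x, y). Then for every prime p dividing d, ord_p(x) = ord_p(y), and ord_p(x − y) = m · ord_p(d). -/
open Finset

lemma aux_not_dvd_geom (p x k : ℕ) (hp : p.Prime) (hpx : p ∣ x) (hk : 1 ≤ k) :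
    ¬ p ∣ ∑ i ∈ range k, x ^ i := by
  intro h
  have he : ∑ i ∈ range k, x ^ i = x * ∑ i ∈ range (k - 1), x ^ i + 1 := by
    conv_lhs => rw [show k = (k - 1) + 1 by omega]
    exact geom_sum_succ
  rw [he] at h
  have h1 : p ∣ 1 := (Nat.dvd_add_right (hpx.mul_right _)).mp h
  exact hp.one_lt.ne' (Nat.dvd_one.mp h1)

theorem stmt_10 (x y m n : ℕ) (hxy : y < x) (hy : 1 < y) (hm : 2 < m) (hn : 2 < n)
    (heq : (x ^ m - 1) / (x - 1) = (y ^ n - 1) / (y - 1)) :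
    ∀ p : ℕ, p.Prime → p ∣ Nat.gcd x y →
      x.factorization p = y.factorization p ∧
      (x - y).factorization p = m * (Nat.gcd x y).factorization p := by
  have hx : 1 < x := hy.trans hxy
  have hdiv : ∀ (z k : ℕ), 1 < z → (z ^ k - 1) / (z - 1) = ∑ i ∈ range k, z ^ i := by
    intro z k hz
    rw [← geom_sum_mul_of_one_le hz.le k, Nat.mul_div_cancel _ (by omega)]
  rw [hdiv x m hx, hdiv y n hy] at heq
  -- heq : ∑ i in range m, x^i = ∑ i in range n, y^i
  have hmn : m < n := by
    by_contra h
    push_neg at h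
    have h1 : ∑ i ∈ range n, y ^ i < ∑ i ∈ range n, x ^ i := by
      apply Finset.sum_lt_sum (fun i _ => Nat.pow_le_pow_left hxy.le i)
      exact ⟨1, Finset.mem_range.mpr (by omega), by simpa using hxy⟩
    have h2 : ∑ i ∈ range n, x ^ i ≤ ∑ i ∈ range m, x ^ i :=
      Finset.sum_le_sum_of_subset (Finset.range_subset_range.mpr h)
    omega
  intro p hp hpd
  have hpx : p ∣ x := hpd.trans (Nat.gcd_dvd_left x y)
  have hpy : p ∣ y := hpd.trans (Nat.gcd_dvd_right x y)
  -- claim 1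
  have hsplit : ∀ (z k : ℕ), 1 ≤ k →
      ∑ i ∈ range k, z ^ i = z * ∑ i ∈ range (k - 1), z ^ i + 1 := by
    intro z k hk
    conv_lhs => rw [show k = (k - 1) + 1 by omega]
    exact geom_sum_succ
  have h1 : x * ∑ i ∈ range (m - 1), x ^ i = y * ∑ i ∈ range (n - 1), y ^ i := by
    rw [hsplit x m (by omega), hsplit y n (by omega)] at heq
    omega
  have hS1 : (∑ i ∈ range (m - 1), x ^ i).factorization p = 0 :=
    Nat.factorization_eq_zero_of_not_dvd (aux_not_dvd_geom p x (m-1) hp hpx (by omega))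
  have hS2 : (∑ i ∈ range (n - 1), y ^ i).factorization p = 0 :=
    Nat.factorization_eq_zero_of_not_dvd (aux_not_dvd_geom p y (n-1) hp hpy (by omega))
  have hS1pos : 0 < ∑ i ∈ range (m - 1), x ^ i :=
    Finset.sum_pos (fun i _ => pow_pos (by omega) i) (Finset.nonempty_range_iff.mpr (by omega))
  have hS2pos : 0 < ∑ i ∈ range (n - 1), y ^ i :=
    Finset.sum_pos (fun i _ => pow_pos (by omega) i) (Finset.nonempty_range_iff.mpr (by omega))
  have claim1 : x.factorization p = y.factorization p := by
    have := congrArg (fun t => t.factorization p) h1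
    simp only [Nat.factorization_mul (by omega : x ≠ 0) hS1pos.ne',
      Nat.factorization_mul (by omega : y ≠ 0) hS2pos.ne', Finsupp.coe_add, Pi.add_apply,
      hS1, hS2] at this
    omega
  have hgcd : (Nat.gcd x y).factorization p = y.factorization p := by
    rw [Nat.factorization_gcd (by omega) (by omega)]
    simp [claim1]
  refine ⟨claim1, ?_⟩
  rw [hgcd]
  -- claim 2
  set c : ℕ → ℕ := fun i => ∑ j ∈ range i, x ^ j * y ^ (i - 1 - j) with hc
  set C : ℕ := ∑ i ∈ range m, c i with hC
  set D : ℕ := ∑ i ∈ range (n - m), y ^ i with hD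
  have hE : (x - y) * C = y ^ m * D := by
    have : ((x : ℤ) - y) * (C : ℤ) = (y : ℤ) ^ m * D := by
      have hAZ : (∑ i ∈ range m, (x : ℤ) ^ i) = ∑ i ∈ range n, (y : ℤ) ^ i := by
        exact_mod_cast congrArg (fun t : ℕ => (t : ℤ)) heq
      have hCZ : (C : ℤ) = ∑ i ∈ range m, ∑ j ∈ range i, (x : ℤ) ^ j * (y : ℤ) ^ (i - 1 - j) := by
        push_cast [hC, hc]; rfl
      rw [hCZ, mul_comm, Finset.sum_mul]
      have : ∀ i ∈ range m, (∑ j ∈ range i, (x : ℤ) ^ j * (y : ℤ) ^ (i - 1 - j)) * ((x : ℤ) - y)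
          = (x : ℤ) ^ i - (y : ℤ) ^ i := fun i _ => geom_sum₂_mul _ _ i
      rw [Finset.sum_congr rfl this, Finset.sum_sub_distrib, hAZ,
        ← Finset.sum_Ico_eq_sub _ hmn.le, Finset.sum_Ico_eq_sum_range]
      push_cast [hD]
      rw [Finset.mul_sum]
      exact Finset.sum_congr rfl fun i _ => by rw [pow_add]
    have h2 : ((x - y : ℕ) : ℤ) * (C : ℤ) = ((y ^ m * D : ℕ) : ℤ) := by
      push_cast [Nat.cast_sub hxy.le]
      exact this
    exact_mod_cast h2
  -- C = 1 + R with p ∣ R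
  have hCsplit : C = 1 + ∑ i ∈ Ico 2 m, c i := by
    rw [hC, ← Finset.sum_range_add_sum_Ico _ (by omega : 2 ≤ m)]
    simp [Finset.sum_range_succ, hc]
  have hpR : p ∣ ∑ i ∈ Ico 2 m, c i := by
    apply Finset.dvd_sum
    intro i hi
    rw [Finset.mem_Ico] at hi
    apply Finset.dvd_sum
    intro j hj
    rw [Finset.mem_range] at hj
    rcases Nat.eq_zero_or_pos j with hj0 | hj0
    · subst hj0
      exact Dvd.dvd.mul_left (dvd_pow hpy (by omega)) _
    · exact Dvd.dvd.mul_right (dvd_pow hpx (by omega)) _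
  have hpC : ¬ p ∣ C := by
    rw [hCsplit]
    intro h
    have h1 : p ∣ 1 := (Nat.dvd_add_right hpR).mp (by rwa [add_comm] at h)
    exact hp.one_lt.ne' (Nat.dvd_one.mp h1)
  have hpD : ¬ p ∣ D := aux_not_dvd_geom p y (n - m) hp hpy (by omega)
  have hCpos : 0 < C := by omega
  have hDpos : 0 < D := by
    rcases Nat.eq_zero_or_pos D with h | h
    · exact absurd (h ▸ dvd_zero p) hpD
    · exact h
  have := congrArg (fun t => t.factorization p) hE
  simp only [Nat.factorization_mul (by omega : x - y ≠ 0) hCpos.ne',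
    Nat.factorization_mul (pow_pos (by omega : 0 < y) m).ne' hDpos.ne',
    Nat.factorization_pow, Finsupp.coe_add, Pi.add_apply, Finsupp.smul_apply,
    Nat.factorization_eq_zero_of_not_dvd hpC, Nat.factorization_eq_zero_of_not_dvd hpD,
    smul_eq_mul] at this
  omega
end

section
/- Let x > y > 1 be integers with (x^m − 1)/(x − 1) = (y^n − 1)/(y − 1) where 2 < m < n. Then x^(m−1) < 2 y^(n−1), and consequently x < 2^(1/(m−1)) · y^((n−1)/(m−1)). -/
lemma geom_div_aux (a k : ℕ) (ha : 1 < a) :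
    (a ^ k - 1) / (a - 1) = ∑ i ∈ Finset.range k, a ^ i := by
  have h : (a - 1) * ∑ i ∈ Finset.range k, a ^ i = a ^ k - 1 := by
    have h1 := geom_sum_mul (x := (a : ℤ)) k
    have ha1 : 1 ≤ a := le_of_lt ha
    have hak : 1 ≤ a ^ k := Nat.one_le_pow _ _ (by omega)
    zify [ha1, hak]
    linarith [h1]
  rw [← h, Nat.mul_div_cancel_left _ (by omega)]

lemma sum_lt_aux (y : ℕ) (hy : 2 ≤ y) :
    ∀ n, 1 ≤ n → ∑ i ∈ Finset.range n, y ^ i < 2 * y ^ (n - 1) := by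
  intro n hn
  induction n with
  | zero => omega
  | succ k ih =>
    rcases Nat.eq_zero_or_pos k with hk | hk
    · subst hk; simp
    · have h1 := ih hk
      rw [Finset.sum_range_succ]
      have h2 : 2 * y ^ (k - 1) ≤ y ^ k := by
        calc 2 * y ^ (k - 1) ≤ y * y ^ (k - 1) := by
              exact Nat.mul_le_mul_right _ hy
          _ = y ^ k := by
              rw [← pow_succ']
              congr 1; omega
      have : ∑ i ∈ Finset.range k, y ^ i < y ^ k := lt_of_lt_of_le h1 h2
      simp only [Nat.add_sub_cancel]
      omega

theorem stmt_11 (x y m n : ℕ) (hxy : y < x) (hy : 1 < y) (hm : 2 < m) (hmn : m < n)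
    (heq : (x ^ m - 1) / (x - 1) = (y ^ n - 1) / (y - 1)) :
    x ^ (m - 1) < 2 * y ^ (n - 1) ∧
    (x : ℝ) < (2 : ℝ) ^ (1 / ((m : ℝ) - 1)) * (y : ℝ) ^ (((n : ℝ) - 1) / ((m : ℝ) - 1)) := by
  have hx : 1 < x := lt_trans hy hxy
  have hS : ∑ i ∈ Finset.range m, x ^ i = ∑ i ∈ Finset.range n, y ^ i := by
    rw [← geom_div_aux x m hx, ← geom_div_aux y n hy, heq]
  -- strict lower bound on x side
  have hxlow : x ^ (m - 1) < ∑ i ∈ Finset.range m, x ^ i := by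
    have hm1 : m = (m - 1) + 1 := by omega
    rw [hm1, Finset.sum_range_succ]
    simp only [Nat.add_sub_cancel]
    have h0 : 1 ≤ ∑ i ∈ Finset.range (m - 1), x ^ i := by
      calc 1 = x ^ 0 := by simp
        _ ≤ ∑ i ∈ Finset.range (m - 1), x ^ i :=
          Finset.single_le_sum (f := fun i => x ^ i) (fun _ _ => Nat.zero_le _)
            (Finset.mem_range.mpr (by omega))
    omega
  have hyup : ∑ i ∈ Finset.range n, y ^ i < 2 * y ^ (n - 1) :=
    sum_lt_aux y hy n (by omega)
  have h1 : x ^ (m - 1) < 2 * y ^ (n - 1) := by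
    rw [hS] at hxlow; omega
  refine ⟨h1, ?_⟩
  -- real part
  have hmr : (0:ℝ) < (m:ℝ) - 1 := by
    have : (3:ℝ) ≤ m := by exact_mod_cast hm
    linarith
  have hz : (0:ℝ) < 1 / ((m:ℝ) - 1) := by positivity
  have hR : ((x:ℝ)) ^ (m - 1) < 2 * (y:ℝ) ^ (n - 1) := by
    exact_mod_cast h1
  have hxpos : (0:ℝ) < x := by positivity
  have h2 := Real.rpow_lt_rpow (by positivity) hR hz
  have hcm : ((m - 1 : ℕ) : ℝ) = (m:ℝ) - 1 := by
    push_cast [Nat.cast_sub (by omega : 1 ≤ m)]; ring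
  have hcn : ((n - 1 : ℕ) : ℝ) = (n:ℝ) - 1 := by
    push_cast [Nat.cast_sub (by omega : 1 ≤ n)]; ring
  have hL : (((x:ℝ)) ^ (m - 1)) ^ (1 / ((m:ℝ) - 1)) = (x:ℝ) := by
    rw [← Real.rpow_natCast (x:ℝ) (m-1), ← Real.rpow_mul (le_of_lt hxpos), hcm,
      mul_one_div, div_self (ne_of_gt hmr), Real.rpow_one]
  have hRr : (2 * (y:ℝ) ^ (n - 1)) ^ (1 / ((m:ℝ) - 1)) =
      (2:ℝ) ^ (1 / ((m:ℝ) - 1)) * (y:ℝ) ^ (((n:ℝ) - 1) / ((m:ℝ) - 1)) := by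
    rw [Real.mul_rpow (by norm_num) (by positivity),
      ← Real.rpow_natCast (y:ℝ) (n-1), ← Real.rpow_mul (by positivity), hcn,
      mul_one_div]
  rw [hL, hRr] at h2
  exact h2
end

section
/- For every integer k ≥ 14, 2(k − 1 − π(k)) > k − 1, where π(k) is the number of primes up to k. -/
/-!
Past 33 every prime is coprime to 6, so at most two residues in each block of six consecutive
integers can be prime; starting from `π 33 = 11` this gives `π k ≤ k / 3 + 2`, which is far below
`(k - 1) / 2`. The finitely many `k` between 14 and 32 are checked directly.
-/

open Nat

theorem primeCounting_le_div_three_add_two {k : ℕ} (hk : 33 ≤ k) :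
    primeCounting k ≤ k / 3 + 2 := by
  obtain ⟨n, rfl⟩ := Nat.exists_eq_add_of_le hk
  have h := primeCounting_add_le (a := 6) (k := 33) (by norm_num) (by norm_num) n
  rw [show primeCounting 33 = 11 by decide, show totient 6 = 2 by decide] at h
  omega

theorem two_mul_primeCounting_lt {k : ℕ} (hk : 14 ≤ k) : 2 * primeCounting k < k - 1 := by
  rcases lt_or_ge k 33 with hsmall | hlarge
  · have hcheck : ∀ k ∈ Finset.Ico 14 33, 2 * primeCounting k < k - 1 := by decide
    exact hcheck k (Finset.mem_Ico.mpr ⟨hk, hsmall⟩)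
  · have := primeCounting_le_div_three_add_two hlarge
    omega

theorem stmt_18 (k : ℕ) (hk : 14 ≤ k) :
    k - 1 < 2 * (k - 1 - Nat.primeCounting k) := by
  have := two_mul_primeCounting_lt hk
  omega
end

section
/- Assume that for all pairwise coprime positive integers a, b, c with a + b = c one has c < N(abc)^(7/4). If integers x > y > 1 and 2 < m < n satisfy (x^m − 1)/(x − 1) = (y^n − 1)/(y − 1), then m ≤ 7. -/
lemma rad_dvd_self (n : ℕ) : rad n ∣ n := Nat.prod_primeFactors_dvd n

lemma one_le_rad (n : ℕ) : 1 ≤ rad n :=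
  Finset.one_le_prod' fun p hp => (Nat.prime_of_mem_primeFactors hp).one_le

lemma rad_dvd_rad {u v : ℕ} (hv : v ≠ 0) (h : u ∣ v) : rad u ∣ rad v :=
  Finset.prod_dvd_prod_of_subset _ _ _ (Nat.primeFactors_mono h hv)

lemma rad_mul_dvd (u v : ℕ) : rad (u * v) ∣ rad u * rad v := by
  rcases eq_or_ne u 0 with rfl | hu
  · simp [rad]
  rcases eq_or_ne v 0 with rfl | hv
  · simp [rad]
  unfold rad
  rw [Nat.primeFactors_mul hu hv]
  calc ∏ p ∈ u.primeFactors ∪ v.primeFactors, p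
      = (∏ p ∈ u.primeFactors, p) * ∏ p ∈ v.primeFactors \ u.primeFactors, p := by
        rw [← Finset.prod_union (Finset.disjoint_sdiff), Finset.union_sdiff_self_eq_union]
    _ ∣ (∏ p ∈ u.primeFactors, p) * ∏ p ∈ v.primeFactors, p :=
        mul_dvd_mul_left _ (Finset.prod_dvd_prod_of_subset _ _ _ (Finset.sdiff_subset))

lemma rad_pow (x : ℕ) {m : ℕ} (hm : m ≠ 0) : rad (x ^ m) = rad x := by
  unfold rad; rw [Nat.primeFactors_pow x hm]

theorem stmt_19
    (hABC : ∀ a b c : ℕ, 0 < a → 0 < b → 0 < c →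
      Nat.Coprime a b → Nat.Coprime b c → Nat.Coprime a c → a + b = c →
      (c : ℝ) < (rad (a * b * c) : ℝ) ^ ((7 : ℝ) / 4))
    (x y m n : ℕ) (hxy : y < x) (hy : 1 < y) (hm : 2 < m) (hmn : m < n)
    (heq : (x ^ m - 1) / (x - 1) = (y ^ n - 1) / (y - 1)) :
    m ≤ 7 := by
  have hx : 1 < x := lt_trans hy hxy
  have hx0 : 0 < x := by omega
  have hy0 : 0 < y := by omega
  -- exact divisibility
  have hdx : (x - 1) ∣ x ^ m - 1 := by have := Nat.sub_dvd_pow_sub_pow x 1 m; simpa using this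
  have hdy : (y - 1) ∣ y ^ n - 1 := by have := Nat.sub_dvd_pow_sub_pow y 1 n; simpa using this
  obtain ⟨L, hL⟩ := hdx
  obtain ⟨K, hK⟩ := hdy
  have hLK : L = K := by
    rw [hL, hK, Nat.mul_div_cancel_left _ (by omega : 0 < x - 1),
      Nat.mul_div_cancel_left _ (by omega : 0 < y - 1)] at heq
    exact heq
  subst hLK
  -- key product identity
  have key : (y - 1) * (x ^ m - 1) = (x - 1) * (y ^ n - 1) := by
    rw [hL, hK]; ring
  have hXm : 1 ≤ x ^ m := Nat.one_le_pow _ _ hx0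
  have hYn : 1 ≤ y ^ n := Nat.one_le_pow _ _ hy0
  -- rearranged identity
  have key2 : (y - 1) * x ^ m + (x - y) = (x - 1) * y ^ n := by
    zify [hXm, hYn, hy.le, hxy.le, hx.le] at key ⊢
    linear_combination key
  set A := (y - 1) * x ^ m with hA
  set B := x - y with hB
  set C := (x - 1) * y ^ n with hC
  have hApos : 0 < A := Nat.mul_pos (by omega) (by omega)
  have hBpos : 0 < B := by omega
  have hCpos : 0 < C := Nat.mul_pos (by omega) (by omega)
  set g := Nat.gcd A B with hg
  have hgpos : 0 < g := Nat.gcd_pos_of_pos_left _ hApos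
  have hgA : g ∣ A := Nat.gcd_dvd_left _ _
  have hgB : g ∣ B := Nat.gcd_dvd_right _ _
  have hgC : g ∣ C := key2 ▸ Nat.dvd_add hgA hgB
  set a := A / g with ha
  set b := B / g with hb
  set c := C / g with hc
  have hag : a * g = A := Nat.div_mul_cancel hgA
  have hbg : b * g = B := Nat.div_mul_cancel hgB
  have hcg : c * g = C := Nat.div_mul_cancel hgC
  have habc : a + b = c := by
    have : (a + b) * g = c * g := by rw [add_mul, hag, hbg, hcg, key2]
    exact Nat.eq_of_mul_eq_mul_right hgpos this
  have hapos : 0 < a := Nat.div_pos (Nat.le_of_dvd hApos hgA) hgpos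
  have hbpos : 0 < b := Nat.div_pos (Nat.le_of_dvd hBpos hgB) hgpos
  have hcpos : 0 < c := by omega
  have cop_ab : Nat.Coprime a b := Nat.coprime_div_gcd_div_gcd hgpos
  have cop_bc : Nat.Coprime b c := by rw [← habc]; simpa using cop_ab.symm
  have cop_ac : Nat.Coprime a c := by rw [← habc]; simpa using cop_ab
  have habc_ineq := hABC a b c hapos hbpos hcpos cop_ab cop_bc cop_ac habc
  set ρ := rad (a * b * c) with hρ
  -- bounds on the radical
  have hradA : rad a ≤ (y - 1) * x := by
    have h1 : rad a ∣ rad A := rad_dvd_rad hApos.ne' ⟨g, hag.symm⟩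
    have h2 : rad A ∣ rad (y - 1) * rad (x ^ m) := rad_mul_dvd _ _
    have h3 : rad (x ^ m) = rad x := rad_pow x (by omega)
    have h4 : rad (y - 1) * rad x ∣ (y - 1) * x :=
      mul_dvd_mul (rad_dvd_self _) (rad_dvd_self _)
    exact Nat.le_of_dvd (Nat.mul_pos (by omega) hx0) (h1.trans (h2.trans (h3 ▸ h4)))
  have hradC : rad c ≤ (x - 1) * y := by
    have h1 : rad c ∣ rad C := rad_dvd_rad hCpos.ne' ⟨g, hcg.symm⟩
    have h2 : rad C ∣ rad (x - 1) * rad (y ^ n) := rad_mul_dvd _ _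
    have h3 : rad (y ^ n) = rad y := rad_pow y (by omega)
    have h4 : rad (x - 1) * rad y ∣ (x - 1) * y :=
      mul_dvd_mul (rad_dvd_self _) (rad_dvd_self _)
    exact Nat.le_of_dvd (Nat.mul_pos (by omega) hy0) (h1.trans (h2.trans (h3 ▸ h4)))
  have hradB : rad b * g ≤ B := by
    calc rad b * g ≤ b * g := Nat.mul_le_mul_right _ (Nat.le_of_dvd hbpos (rad_dvd_self b))
      _ = B := hbg
  have hρle : ρ ≤ rad a * rad b * rad c := by
    have h1 : ρ ∣ rad (a * b) * rad c := rad_mul_dvd _ _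
    have h2 : rad (a * b) * rad c ∣ rad a * rad b * rad c :=
      mul_dvd_mul_right (rad_mul_dvd _ _) _
    exact Nat.le_of_dvd (Nat.mul_pos (Nat.mul_pos (one_le_rad a) (one_le_rad b)) (one_le_rad c)) (h1.trans h2)
  -- combined nat bounds
  have hP : ρ * g ≤ ((y - 1) * x) * B * ((x - 1) * y) := by
    calc ρ * g ≤ (rad a * rad b * rad c) * g := Nat.mul_le_mul_right _ hρle
      _ = (rad a) * (rad b * g) * (rad c) := by ring
      _ ≤ ((y - 1) * x) * B * ((x - 1) * y) := by
          exact Nat.mul_le_mul (Nat.mul_le_mul hradA hradB) hradC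
  have hP4 : ((y - 1) * x) * B * ((x - 1) * y) ≤ (y - 1) * x ^ 4 := by
    have h1 : B ≤ x := by omega
    have h2 : x - 1 ≤ x := by omega
    have h3 : y ≤ x := by omega
    calc ((y - 1) * x) * B * ((x - 1) * y) ≤ ((y - 1) * x) * x * (x * x) :=
        Nat.mul_le_mul (Nat.mul_le_mul (le_refl _) h1) (Nat.mul_le_mul h2 h3)
      _ = (y - 1) * x ^ 4 := by ring
  have hρ5 : ρ ≤ x ^ 5 := by
    have : ρ ≤ ρ * g := Nat.le_mul_of_pos_right _ hgpos
    have h2 := this.trans (hP.trans hP4)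
    calc ρ ≤ (y - 1) * x ^ 4 := h2
      _ ≤ x * x ^ 4 := Nat.mul_le_mul_right _ (by omega)
      _ = x ^ 5 := by ring
  -- now the real-number computation
  have hxR : (1 : ℝ) < (x : ℝ) := by exact_mod_cast hx
  have hxR0 : (0 : ℝ) ≤ (x : ℝ) := by positivity
  have hρR1 : (1 : ℝ) ≤ (ρ : ℝ) := by exact_mod_cast one_le_rad _
  have hρR0 : (0 : ℝ) < (ρ : ℝ) := by linarith
  have hCr : (C : ℝ) < (ρ : ℝ) ^ ((7 : ℝ) / 4) * g := by
    have : (C : ℝ) = (c : ℝ) * g := by exact_mod_cast hcg.symm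
    rw [this]
    have hgR : (0 : ℝ) < (g : ℝ) := by exact_mod_cast hgpos
    exact mul_lt_mul_of_pos_right habc_ineq hgR
  have hAC : (A : ℝ) < (C : ℝ) := by exact_mod_cast (by omega : A < C)
  have hsplit : (ρ : ℝ) ^ ((7 : ℝ) / 4) = (ρ : ℝ) ^ ((3 : ℝ) / 4) * (ρ : ℝ) := by
    rw [show (7 : ℝ)/4 = 3/4 + 1 by norm_num, Real.rpow_add hρR0, Real.rpow_one]
  have hrg : (ρ : ℝ) * (g : ℝ) ≤ ((y : ℝ) - 1) * (x : ℝ) ^ 4 := by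
    have := hP.trans hP4
    have h2 : ((ρ * g : ℕ) : ℝ) ≤ (((y - 1) * x ^ 4 : ℕ) : ℝ) := by exact_mod_cast this
    push_cast [hy.le] at h2
    convert h2 using 2 <;> push_cast <;> ring
  have hr34 : (ρ : ℝ) ^ ((3 : ℝ) / 4) ≤ (x : ℝ) ^ ((15 : ℝ) / 4) := by
    have h1 : (ρ : ℝ) ≤ ((x : ℝ)) ^ (5 : ℕ) := by exact_mod_cast hρ5
    calc (ρ : ℝ) ^ ((3 : ℝ) / 4) ≤ (((x : ℝ)) ^ (5 : ℕ)) ^ ((3 : ℝ) / 4) :=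
        Real.rpow_le_rpow (le_of_lt hρR0) h1 (by norm_num)
      _ = (x : ℝ) ^ ((15 : ℝ) / 4) := by
        rw [← Real.rpow_natCast (x : ℝ) 5, ← Real.rpow_mul hxR0]
        norm_num
  -- assemble
  have hy1R : (0 : ℝ) < (y : ℝ) - 1 := by
    have : (1 : ℝ) < (y : ℝ) := by exact_mod_cast hy
    linarith
  have hAR : (A : ℝ) = ((y : ℝ) - 1) * (x : ℝ) ^ m := by
    have : (A : ℕ) = (y - 1) * x ^ m := rfl
    rw [this]; push_cast [hy.le]; ring
  have main : ((y : ℝ) - 1) * (x : ℝ) ^ m < ((y : ℝ) - 1) * ((x : ℝ) ^ ((15 : ℝ) / 4) * (x : ℝ) ^ 4) := by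
    rw [← hAR]
    calc (A : ℝ) < (ρ : ℝ) ^ ((7 : ℝ) / 4) * g := hAC.trans hCr
      _ = (ρ : ℝ) ^ ((3 : ℝ) / 4) * ((ρ : ℝ) * g) := by rw [hsplit]; ring
      _ ≤ (x : ℝ) ^ ((15 : ℝ) / 4) * (((y : ℝ) - 1) * (x : ℝ) ^ 4) := by
          apply mul_le_mul hr34 hrg
          · positivity
          · positivity
      _ = ((y : ℝ) - 1) * ((x : ℝ) ^ ((15 : ℝ) / 4) * (x : ℝ) ^ 4) := by ring
  have hxm : (x : ℝ) ^ m < (x : ℝ) ^ ((15 : ℝ) / 4) * (x : ℝ) ^ 4 :=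
    lt_of_mul_lt_mul_left main (le_of_lt hy1R)
  have hxm2 : (x : ℝ) ^ ((m : ℕ) : ℝ) < (x : ℝ) ^ ((31 : ℝ) / 4) := by
    rw [Real.rpow_natCast]
    calc (x : ℝ) ^ m < (x : ℝ) ^ ((15 : ℝ) / 4) * (x : ℝ) ^ 4 := hxm
      _ = (x : ℝ) ^ ((31 : ℝ) / 4) := by
        rw [← Real.rpow_natCast (x : ℝ) 4, ← Real.rpow_add (by linarith : (0:ℝ) < x)]
        norm_num
  have hfin : ((m : ℕ) : ℝ) < (31 : ℝ) / 4 := (Real.rpow_lt_rpow_left_iff hxR).mp hxm2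
  have : (m : ℝ) < 8 := by linarith
  exact_mod_cast (by exact_mod_cast Nat.lt_succ_iff.mp (by exact_mod_cast (show m < 8 by exact_mod_cast this)) : m ≤ 7)
end
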